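/- arXiv:2010.04130 — 2 statements merged into one kernel-verified Lean document; each statement's English description precedes it below -/
import Mathlib

section
/- Every hyponormal bounded operator T on a complex Hilbert space H can be written as T = S|T|, where S is an isometry on H. -/
noncomputable section

variable {H : Type*} [NormedAddCommGroup H] [InnerProductSpace ℂ H] [CompleteSpace H]

/-- The restriction of `T` to the subspace `M` attains its norm:
there is a unit vector `x ∈ M` with `‖T x‖ = sup {‖T y‖ : y ∈ M, ‖y‖ = 1}`. -/
def NormAttainingOn (T : H →L[ℂ] H) (M : Submodule ℂ H) : Prop :=
  ∃ x ∈ M, ‖x‖ = 1 ∧ ‖T x‖ = sSup {r : ℝ | ∃ y ∈ M, ‖y‖ = 1 ∧ r = ‖T y‖}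

/-- `T` is absolutely norm attaining (an `𝒜𝒩`-operator): its restriction to every
nonzero closed subspace attains its norm. -/
def IsANOperator (T : H →L[ℂ] H) : Prop :=
  ∀ M : Submodule ℂ H, IsClosed (M : Set H) → M ≠ ⊥ → NormAttainingOn T M

/-- The restriction of `T` to the subspace `M` attains its minimum modulus. -/
def MinAttainingOn (T : H →L[ℂ] H) (M : Submodule ℂ H) : Prop :=
  ∃ x ∈ M, ‖x‖ = 1 ∧ ‖T x‖ = sInf {r : ℝ | ∃ y ∈ M, ‖y‖ = 1 ∧ r = ‖T y‖}

/-- `T` is absolutely minimum attaining (an `𝒜ℳ`-operator). -/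
def IsAMOperator (T : H →L[ℂ] H) : Prop :=
  ∀ M : Submodule ℂ H, IsClosed (M : Set H) → M ≠ ⊥ → MinAttainingOn T M

/-- A Fredholm operator: closed range and finite dimensional kernel and co-kernel
(kernel of the adjoint). -/
def IsFredholmOp (T : H →L[ℂ] H) : Prop :=
  IsClosed (LinearMap.range (T : H →ₗ[ℂ] H) : Set H) ∧
    FiniteDimensional ℂ (LinearMap.ker (T : H →ₗ[ℂ] H)) ∧
    FiniteDimensional ℂ (LinearMap.ker ((ContinuousLinearMap.adjoint T : H →L[ℂ] H) : H →ₗ[ℂ] H))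

/-- The essential spectrum: the set of `z` such that `T - z I` is not Fredholm. -/
def essSpectrum (T : H →L[ℂ] H) : Set ℂ :=
  {z : ℂ | ¬ IsFredholmOp (T - z • (1 : H →L[ℂ] H))}

/-- The Fredholm index `dim N(T) - dim N(T*)`. -/
def fredholmIndex (T : H →L[ℂ] H) : ℤ :=
  (Module.finrank ℂ (LinearMap.ker (T : H →ₗ[ℂ] H)) : ℤ) -
    (Module.finrank ℂ (LinearMap.ker ((ContinuousLinearMap.adjoint T : H →L[ℂ] H) : H →ₗ[ℂ] H)) : ℤ)

/-- The Weyl spectrum: the set of `z` such that `T - z I` is not Fredholm of index `0`. -/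
def weylSpectrum (T : H →L[ℂ] H) : Set ℂ :=
  {z : ℂ | ¬ (IsFredholmOp (T - z • (1 : H →L[ℂ] H)) ∧
      fredholmIndex (T - z • (1 : H →L[ℂ] H)) = 0)}

/-- `T` is hyponormal: `T*T - TT* ≥ 0`. -/
def Hyponormal (T : H →L[ℂ] H) : Prop :=
  (ContinuousLinearMap.adjoint T * T - T * ContinuousLinearMap.adjoint T).IsPositive

/-- `T` is paranormal: `‖T x‖² ≤ ‖T² x‖ ‖x‖` for all `x`. -/
def Paranormal (T : H →L[ℂ] H) : Prop :=
  ∀ x : H, ‖T x‖ ^ 2 ≤ ‖T (T x)‖ * ‖x‖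

/-- `|T|`, the unique positive square root of `T*T`. -/
def opAbs (T : H →L[ℂ] H) : H →L[ℂ] H :=
  CFC.sqrt (ContinuousLinearMap.adjoint T * T)

/-- `π₀₀(T)`: the set of isolated eigenvalues of `T` of finite multiplicity. -/
def pi00 (T : H →L[ℂ] H) : Set ℂ :=
  {z : ℂ | z ∈ spectrum ℂ T ∧
    (∃ U : Set ℂ, IsOpen U ∧ U ∩ spectrum ℂ T = {z}) ∧
    LinearMap.ker ((T - z • (1 : H →L[ℂ] H) : H →L[ℂ] H) : H →ₗ[ℂ] H) ≠ ⊥ ∧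
    FiniteDimensional ℂ (LinearMap.ker ((T - z • (1 : H →L[ℂ] H) : H →L[ℂ] H) : H →ₗ[ℂ] H))}

/-!
Hyponormality gives `‖T† x‖ ≤ ‖T x‖`, so `ker T ⊆ ker T† = (range T)ᗮ`, while
`ker T = ker |T| = (range |T|)ᗮ` because `‖|T| x‖ = ‖T x‖`. Hence on the dense subspace
`range |T| + ker T` the map `|T| x + k ↦ T x + k` is well defined and isometric (as `T x ⊥ k`),
and its continuous extension is the isometry `S`.
-/

open ContinuousLinearMap

theorem Submodule.topologicalClosure_sup_orthogonal {𝕜 F : Type*} [RCLike 𝕜]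
    [NormedAddCommGroup F] [InnerProductSpace 𝕜 F] [CompleteSpace F] (K : Submodule 𝕜 F) :
    (K ⊔ Kᗮ).topologicalClosure = ⊤ := by
  rw [← Submodule.orthogonal_orthogonal_eq_closure, ← Submodule.inf_orthogonal,
    Kᗮ.inf_orthogonal_eq_bot, Submodule.bot_orthogonal_eq_top]

theorem LinearMap.exists_isometry_comp_eq_of_norm_eq {𝕜 E F : Type*} [RCLike 𝕜]
    [AddCommGroup E] [Module 𝕜 E] [NormedAddCommGroup F] [InnerProductSpace 𝕜 F]
    [CompleteSpace F] (A B : E →ₗ[𝕜] F) (hnorm : ∀ x, ‖A x‖ = ‖B x‖)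
    (horth : (LinearMap.range A)ᗮ ≤ (LinearMap.range B)ᗮ) :
    ∃ S : F →L[𝕜] F, (∀ y, ‖S y‖ = ‖y‖) ∧ ∀ x, S (A x) = B x := by
  set K := (LinearMap.range A)ᗮ
  set e := A.coprod K.subtype
  set f := B.coprod K.subtype
  have hdense : DenseRange e := by
    rw [DenseRange, ← LinearMap.coe_range, Submodule.dense_iff_topologicalClosure_eq_top,
      LinearMap.range_coprod, Submodule.range_subtype]
    exact (LinearMap.range A).topologicalClosure_sup_orthogonal
  have hfe : ∀ p, ‖f p‖ = ‖e p‖ := by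
    rintro ⟨x, k⟩
    have hBk : inner 𝕜 (B x) (k : F) = 0 :=
      Submodule.inner_right_of_mem_orthogonal (LinearMap.mem_range_self B x) (horth k.2)
    have hAk : inner 𝕜 (A x) (k : F) = 0 :=
      Submodule.inner_right_of_mem_orthogonal (LinearMap.mem_range_self A x) k.2
    rw [← mul_self_inj (norm_nonneg _) (norm_nonneg _)]
    simp only [e, f, LinearMap.coprod_apply, Submodule.subtype_apply]
    rw [norm_add_sq_eq_norm_sq_add_norm_sq_of_inner_eq_zero _ _ hBk,
      norm_add_sq_eq_norm_sq_add_norm_sq_of_inner_eq_zero _ _ hAk, hnorm]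
  have hbound : ∃ C, ∀ p, ‖f p‖ ≤ C * ‖e p‖ := ⟨1, fun p => by rw [hfe, one_mul]⟩
  refine ⟨f.extendOfNorm e, fun y => ?_, fun x => ?_⟩
  · refine hdense.induction_on y (isClosed_eq (by fun_prop) continuous_norm) fun p => ?_
    rw [LinearMap.extendOfNorm_eq hdense hbound, hfe]
  · simpa [e, f] using LinearMap.extendOfNorm_eq hdense hbound (x, 0)

theorem isSelfAdjoint_opAbs (T : H →L[ℂ] H) : IsSelfAdjoint (opAbs T) :=
  (CFC.abs_nonneg T).isSelfAdjoint

theorem norm_opAbs_apply (T : H →L[ℂ] H) (x : H) : ‖opAbs T x‖ = ‖T x‖ := by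
  rw [← sq_eq_sq₀ (norm_nonneg _) (norm_nonneg _), apply_norm_sq_eq_inner_adjoint_left,
    apply_norm_sq_eq_inner_adjoint_left, (isSelfAdjoint_opAbs T).adjoint_eq]
  congr 3
  exact CFC.abs_mul_abs T

theorem ker_opAbs (T : H →L[ℂ] H) : (opAbs T).ker = T.ker := by
  ext x
  simp only [LinearMap.mem_ker, ContinuousLinearMap.coe_coe, ← norm_eq_zero (a := opAbs T x),
    norm_opAbs_apply, norm_eq_zero]

theorem Hyponormal.norm_adjoint_apply_le {T : H →L[ℂ] H} (hT : Hyponormal T) (x : H) :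
    ‖adjoint T x‖ ≤ ‖T x‖ := by
  have h := hT.re_inner_nonneg_left x
  rw [sub_apply, inner_sub_left, map_sub, sub_nonneg] at h
  rw [← sq_le_sq₀ (norm_nonneg _) (norm_nonneg _), apply_norm_sq_eq_inner_adjoint_left,
    apply_norm_sq_eq_inner_adjoint_left, adjoint_adjoint]
  exact h

theorem Hyponormal.ker_le_ker_adjoint {T : H →L[ℂ] H} (hT : Hyponormal T) :
    T.ker ≤ (adjoint T).ker := fun x hx =>
  norm_le_zero_iff.mp ((hT.norm_adjoint_apply_le x).trans_eq (norm_eq_zero.mpr hx))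

/-- Every hyponormal operator `T` factors as `T = S |T|` with `S` an isometry. -/
theorem hyponormal_eq_isometry_mul_abs (T : H →L[ℂ] H) (hhypo : Hyponormal T) :
    ∃ S : H →L[ℂ] H, (∀ x : H, ‖S x‖ = ‖x‖) ∧ T = S * opAbs T := by
  have horth :
      (LinearMap.range (opAbs T : H →ₗ[ℂ] H))ᗮ ≤ (LinearMap.range (T : H →ₗ[ℂ] H))ᗮ := by
    rw [orthogonal_range, orthogonal_range, (isSelfAdjoint_opAbs T).adjoint_eq, ker_opAbs]
    exact hhypo.ker_le_ker_adjoint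
  obtain ⟨S, hS, hST⟩ := LinearMap.exists_isometry_comp_eq_of_norm_eq (opAbs T : H →ₗ[ℂ] H) T
    (norm_opAbs_apply T) horth
  exact ⟨S, hS, ext fun x => (hST x).symm⟩
end
end

section
/- Every compact hyponormal operator T on a complex Hilbert space H is normal. -/
noncomputable section

variable {H : Type*} [NormedAddCommGroup H] [InnerProductSpace ℂ H] [CompleteSpace H]

/-!
Eigenvectors of a hyponormal `T` are eigenvectors of `T†` with the conjugate eigenvalue (apply
`‖(T - c)† x‖ ≤ ‖(T - c) x‖`), so `T†T = TT†` on the span `E` of the eigenvectors, and `Eᗮ` is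
`T`-invariant. Hyponormal operators are paranormal, and a compact paranormal operator on a nonzero
space has an eigenvalue: the vectors at which it attains its norm form the top eigenspace of the
compact operator `T†T`, which is nonzero, finite-dimensional and, by paranormality, invariant.
Applied to the restriction of `T` to `Eᗮ`, this forces `Eᗮ = 0`, so `E` is dense.
-/

open ContinuousLinearMap Module.End
open scoped InnerProductSpace

section

variable {𝕜 E : Type*} [RCLike 𝕜] [NormedAddCommGroup E] [InnerProductSpace 𝕜 E]
  [CompleteSpace E]

theorem ContinuousLinearMap.norm_apply_eq_iff_mem_eigenspace (S : E →L[𝕜] E) (x : E) :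
    ‖S x‖ = ‖S‖ * ‖x‖ ↔
      x ∈ eigenspace ((adjoint S * S : E →L[𝕜] E) : E →ₗ[𝕜] E) ((‖S‖ ^ 2 : ℝ) : 𝕜) := by
  set A := adjoint S * S with hA
  have hSx : ‖S x‖ ^ 2 = RCLike.re ⟪A x, x⟫_𝕜 := apply_norm_sq_eq_inner_adjoint_left S x
  rw [mem_eigenspace_iff, coe_coe]
  constructor
  · intro h
    have hAx : ‖A x‖ ≤ ‖S‖ ^ 2 * ‖x‖ := by
      calc ‖A x‖ ≤ ‖A‖ * ‖x‖ := le_opNorm _ _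
        _ = ‖S‖ ^ 2 * ‖x‖ := by rw [hA, mul_def, norm_adjoint_comp_self, sq]
    have hexpand : ‖A x - ((‖S‖ ^ 2 : ℝ) : 𝕜) • x‖ ^ 2 = ‖A x‖ ^ 2 - (‖S‖ ^ 2 * ‖x‖) ^ 2 := by
      rw [@norm_sub_sq 𝕜, inner_smul_right, RCLike.re_ofReal_mul, ← hSx, h, norm_smul,
        RCLike.norm_ofReal, abs_of_nonneg (by positivity)]
      ring
    have hle : ‖A x - ((‖S‖ ^ 2 : ℝ) : 𝕜) • x‖ ^ 2 ≤ 0 := by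
      rw [hexpand, sub_nonpos]
      exact pow_le_pow_left₀ (norm_nonneg _) hAx 2
    rw [← sub_eq_zero, ← norm_eq_zero]
    exact pow_eq_zero_iff two_ne_zero |>.mp (le_antisymm hle (sq_nonneg _))
  · intro h
    rw [h, inner_smul_left, inner_self_eq_norm_sq_to_K, RCLike.conj_ofReal, ← RCLike.ofReal_pow,
      ← RCLike.ofReal_mul, RCLike.ofReal_re, ← mul_pow] at hSx
    exact (pow_left_inj₀ (norm_nonneg _) (by positivity) two_ne_zero).mp hSx

end

theorem IsCompactOperator.hasEigenvalue_adjoint_mul_self {T : H →L[ℂ] H}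
    (hT : IsCompactOperator T) (hT0 : T ≠ 0) :
    HasEigenvalue ((adjoint T * T : H →L[ℂ] H) : H →ₗ[ℂ] H) ((‖T‖ ^ 2 : ℝ) : ℂ) := by
  have : Nontrivial H := by
    by_contra hH
    rw [not_nontrivial_iff_subsingleton] at hH
    exact hT0 (Subsingleton.elim _ _)
  have hnorm : ‖adjoint T * T‖ = ‖T‖ ^ 2 := by rw [mul_def, norm_adjoint_comp_self, sq]
  have hspec : ((‖T‖ ^ 2 : ℝ) : ℂ) ∈ spectrum ℂ (adjoint T * T) := by
    rw [← hnorm, ← Complex.coe_algebraMap, spectrum.algebraMap_mem_iff]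
    have hnonneg : 0 ≤ adjoint T * T := by simpa [star_eq_adjoint] using star_mul_self_nonneg T
    exact CStarAlgebra.norm_mem_spectrum_of_nonneg hnonneg
  have hcpt : IsCompactOperator (adjoint T * T) := hT.clm_comp (adjoint T)
  refine (hcpt.hasEigenvalue_iff_mem_spectrum ?_).mpr hspec
  exact_mod_cast (pow_pos (norm_pos_iff.mpr hT0) 2).ne'

namespace Paranormal

section

variable {E : Type*} [NormedAddCommGroup E] [InnerProductSpace ℂ E] {T : E →L[ℂ] E}

theorem norm_apply_apply_eq (hT : Paranormal T) {x : E} (hx : ‖T x‖ = ‖T‖ * ‖x‖) :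
    ‖T (T x)‖ = ‖T‖ * ‖T x‖ := by
  rcases eq_or_ne x 0 with rfl | hx0
  · simp
  refine le_antisymm (le_opNorm T (T x)) ?_
  have hpos : 0 < ‖x‖ := norm_pos_iff.mpr hx0
  have h := hT x
  rw [hx] at h ⊢
  nlinarith [le_opNorm T (T x)]

theorem restrict (hT : Paranormal T) {V : Submodule ℂ E}
    (hV : ∀ v ∈ V, T v ∈ V) : Paranormal (T.restrict hV) := fun v => by
  simpa only [Submodule.coe_norm, coe_restrict_apply] using hT v

end

theorem exists_hasEigenvalue [Nontrivial H] {T : H →L[ℂ] H} (hT : Paranormal T)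
    (hcpt : IsCompactOperator T) :
    ∃ μ, HasEigenvalue (T : H →ₗ[ℂ] H) μ := by
  rcases eq_or_ne T 0 with rfl | hT0
  · obtain ⟨x, hx⟩ := exists_ne (0 : H)
    exact ⟨0, hasEigenvalue_of_hasEigenvector ⟨mem_eigenspace_iff.mpr (by simp), hx⟩⟩
  -- `K` is the space of vectors at which `T` attains its norm.
  set K := eigenspace ((adjoint T * T : H →L[ℂ] H) : H →ₗ[ℂ] H) ((‖T‖ ^ 2 : ℝ) : ℂ)
  have hK : ∀ x ∈ K, T x ∈ K := fun x hx =>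
    (T.norm_apply_eq_iff_mem_eigenspace (T x)).mp
      (hT.norm_apply_apply_eq ((T.norm_apply_eq_iff_mem_eigenspace x).mpr hx))
  have : FiniteDimensional ℂ K := finite_dimensional_eigenspace (hcpt.clm_comp (adjoint T)) _
    (by exact_mod_cast (pow_pos (norm_pos_iff.mpr hT0) 2).ne')
  have : Nontrivial K := Submodule.nontrivial_iff_ne_bot.mpr
    (hasEigenvalue_iff.mp (hcpt.hasEigenvalue_adjoint_mul_self hT0))
  obtain ⟨μ, hμ⟩ := exists_eigenvalue ((T : H →ₗ[ℂ] H).restrict hK)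
  obtain ⟨v, hv⟩ := hμ.exists_hasEigenvector
  refine ⟨μ, hasEigenvalue_of_hasEigenvector (x := (v : H)) ⟨?_, by simpa using hv.2⟩⟩
  exact mem_eigenspace_iff.mpr (congrArg Subtype.val hv.apply_eq_smul)

end Paranormal

namespace Hyponormal

variable {T : H →L[ℂ] H}

theorem norm_adjoint_apply_le_s12 (hT : Hyponormal T) (x : H) : ‖adjoint T x‖ ≤ ‖T x‖ := by
  have h := hT.re_inner_nonneg_left x
  rw [sub_apply, inner_sub_left, map_sub, sub_nonneg] at h
  have hTT : ‖T x‖ ^ 2 = RCLike.re ⟪(adjoint T * T) x, x⟫_ℂ :=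
    apply_norm_sq_eq_inner_adjoint_left T x
  have hTT' : ‖adjoint T x‖ ^ 2 = RCLike.re ⟪(T * adjoint T) x, x⟫_ℂ := by
    simpa using apply_norm_sq_eq_inner_adjoint_left (adjoint T) x
  exact pow_le_pow_iff_left₀ (norm_nonneg _) (norm_nonneg _) two_ne_zero |>.mp (by linarith)

theorem paranormal (hT : Hyponormal T) : Paranormal T := fun x => by
  calc ‖T x‖ ^ 2 = RCLike.re ⟪adjoint T (T x), x⟫_ℂ := apply_norm_sq_eq_inner_adjoint_left T x
    _ ≤ ‖adjoint T (T x)‖ * ‖x‖ := (RCLike.re_le_norm _).trans (norm_inner_le_norm _ _)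
    _ ≤ ‖T (T x)‖ * ‖x‖ := by gcongr; exact hT.norm_adjoint_apply_le_s12 (T x)

theorem sub_smul_one (hT : Hyponormal T) (c : ℂ) : Hyponormal (T - c • 1) := by
  have : adjoint (T - c • 1) * (T - c • 1) - (T - c • 1) * adjoint (T - c • 1) =
      adjoint T * T - T * adjoint T := by
    simp only [← star_eq_adjoint, star_sub, star_smul, star_one, sub_mul, mul_sub, smul_mul_assoc,
      mul_smul_comm, one_mul, mul_one]
    module
  rw [Hyponormal, this]
  exact hT

theorem adjoint_apply_eq_of_apply_eq (hT : Hyponormal T) {c : ℂ} {x : H} (hx : T x = c • x) :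
    adjoint T x = star c • x := by
  have h := (hT.sub_smul_one c).norm_adjoint_apply_le_s12 x
  rw [← star_eq_adjoint, star_sub, star_smul, star_one, star_eq_adjoint] at h
  simpa [hx, sub_eq_zero] using h

theorem iSup_eigenspaces_mem_invtSubmodule_adjoint (hT : Hyponormal T) :
    (⨆ μ, eigenspace (T : H →ₗ[ℂ] H) μ) ∈ invtSubmodule (adjoint T : H →ₗ[ℂ] H) := by
  rw [mem_invtSubmodule_iff_map_le, Submodule.map_iSup]
  refine iSup_mono fun μ => (mem_invtSubmodule_iff_map_le _).mp ?_
  refine (mem_invtSubmodule_iff_forall_mem_of_mem _).mpr fun x hx => ?_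
  rw [coe_coe, hT.adjoint_apply_eq_of_apply_eq (mem_eigenspace_iff.mp hx)]
  exact Submodule.smul_mem _ _ hx

theorem orthogonal_iSup_eigenspaces_eq_bot (hT : Hyponormal T) (hcpt : IsCompactOperator T) :
    (⨆ μ, eigenspace (T : H →ₗ[ℂ] H) μ)ᗮ = ⊥ := by
  set N := (⨆ μ, eigenspace (T : H →ₗ[ℂ] H) μ)ᗮ
  have hN : ∀ v ∈ N, T v ∈ N := (mem_invtSubmodule_iff_forall_mem_of_mem _).mp
    (orthogonal_mem_invtSubmodule hT.iSup_eigenspaces_mem_invtSubmodule_adjoint)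
  rw [← Submodule.subsingleton_iff_eq_bot]
  by_contra! hN'
  obtain ⟨μ, hμ⟩ := (hT.paranormal.restrict hN).exists_hasEigenvalue (hcpt.restrict' hN)
  refine hasEigenvalue_iff.mp hμ (eigenspace_restrict_eq_bot hN ?_)
  exact ((Submodule.isOrtho_orthogonal_right _).mono_left (le_iSup _ μ)).disjoint

theorem adjoint_mul_self_apply_eq_of_apply_eq (hT : Hyponormal T) {c : ℂ} {x : H}
    (hx : T x = c • x) : (adjoint T * T) x = (T * adjoint T) x := by
  simp only [mul_apply_eq_comp, hx, hT.adjoint_apply_eq_of_apply_eq hx, map_smul, smul_smul,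
    mul_comm]

end Hyponormal

/-- Every compact hyponormal operator on a complex Hilbert space is normal. -/
theorem compact_hyponormal_normal (T : H →L[ℂ] H)
    (hcpt : IsCompactOperator T) (hhypo : Hyponormal T) :
    ContinuousLinearMap.adjoint T * T = T * ContinuousLinearMap.adjoint T := by
  set E := ⨆ μ, eigenspace (T : H →ₗ[ℂ] H) μ
  have hE : E ≤ LinearMap.ker ((adjoint T * T - T * adjoint T : H →L[ℂ] H) : H →ₗ[ℂ] H) :=
    iSup_le fun μ x hx => by
      rw [LinearMap.mem_ker, coe_coe, sub_apply, sub_eq_zero]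
      exact hhypo.adjoint_mul_self_apply_eq_of_apply_eq (mem_eigenspace_iff.mp hx)
  have hker := E.topologicalClosure_minimal hE (isClosed_ker _)
  rw [← E.orthogonal_orthogonal_eq_closure, hhypo.orthogonal_iSup_eigenspaces_eq_bot hcpt,
    Submodule.bot_orthogonal_eq_top, top_le_iff, LinearMap.ker_eq_top] at hker
  exact sub_eq_zero.mp (coe_injective hker)
end
end
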